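/- Under the construction setup with 1 ≤ r ≤ 𝔫, set δ := 𝔫 − r + 1, and for a non-negative integer ∂ and positive integers n_r, n_c define B(∂, n_r, n_c) := max{ 𝔫² − ∂ + (𝔫 − n_r)(𝔫 − n_c), n_r·δ, n_c·δ }. Then for every non-negative integer ∂ and every nonzero polynomial w ∈ span_F(B_{r²}) with deg(w) ≤ ∂, the number of points α ∈ Z_f ⊕ Z_g with w(α) ≠ 0 is at least min{ B(∂, n_r, n_c) : n_r, n_c integers with δ ≤ n_r ≤ 𝔫 and δ ≤ n_c ≤ 𝔫 }. In particular, the evaluation code on Z_f ⊕ Z_g of the polynomials in span_F(B_{r²}) of degree at most ∂ has minimum distance at least this minimum. -/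

import Mathlib

open Polynomial
open scoped Classical

/-- The point set `Z_f ⊕ Z_g = {β + γ : β ∈ Z_f, γ ∈ Z_g}`. -/
noncomputable def rootSumSet {F : Type*} [Field F] (f g : F[X]) : Finset F :=
  (f.roots.toFinset ×ˢ g.roots.toFinset).image fun p => p.1 + p.2

/-- The set `B_{r²} = {g^i f^j : 0 ≤ i, j ≤ r-1}` of polynomials. -/
def Bset {F : Type*} [Field F] (f g : F[X]) (r : ℕ) : Set F[X] :=
  {w | ∃ i j : ℕ, i < r ∧ j < r ∧ w = g ^ i * f ^ j}

/-- The linear evaluation map `F[X] → (S → F)` on a finite set `S` of points. -/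
noncomputable def evalOn {F : Type*} [Field F] (S : Finset F) : F[X] →ₗ[F] (↥S → F) :=
  LinearMap.pi fun α => Polynomial.leval (α : F)

/-- With `δ := 𝔫 - r + 1`, the set of values
`B(∂, n_r, n_c) = max{𝔫² − ∂ + (𝔫 − n_r)(𝔫 − n_c), n_r·δ, n_c·δ}` (computed in `ℤ`)
over all integers `δ ≤ n_r ≤ 𝔫` and `δ ≤ n_c ≤ 𝔫`. -/
def lbSet (𝔫 r D : ℕ) : Set ℤ :=
  {m : ℤ | ∃ nr nc : ℕ, 𝔫 - r + 1 ≤ nr ∧ nr ≤ 𝔫 ∧ 𝔫 - r + 1 ≤ nc ∧ nc ≤ 𝔫 ∧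
    m = max ((𝔫 : ℤ) ^ 2 - (D : ℤ) + ((𝔫 : ℤ) - (nr : ℤ)) * ((𝔫 : ℤ) - (nc : ℤ)))
          (max ((nr : ℤ) * ((𝔫 : ℤ) - (r : ℤ) + 1)) ((nc : ℤ) * ((𝔫 : ℤ) - (r : ℤ) + 1)))}

/-! Since `f` is additive and `g = X - f`, for `β ∈ Z_f` and `γ ∈ Z_g` we get `f(β + γ) = γ` and
`g(β + γ) = β`. Hence `(β, γ) ↦ β + γ` is a bijection `Z_f × Z_g ≃ Z_f ⊕ Z_g`, and writing
`w = P(g, f)` with `P ∈ F[X][Y]` of bidegree `< r`, the value of `w` at `β + γ` is `P(β, γ)`.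
On the grid `Z_f × Z_g`, each of the `n_r` nonzero rows and `n_c` nonzero columns of `P` carries at
least `δ` nonzero values. Moreover `P = a(X) · b(Y) · U` with `a`, `b` the products of the linear
factors of the zero rows and zero columns; every zero of `P` in the `n_r × n_c` subgrid of nonzero
rows and columns is a zero of `U`, hence gives a distinct root of `U(g, f)`, whose degree is
`deg w - (𝔫 - n_r)𝔫 - (𝔫 - n_c)𝔫`. -/

open Polynomial Polynomial.Bivariate Finset

section LinearizedPolynomial

variable {R : Type*} [CommSemiring R] {p : ℕ} {f : R[X]}

theorem derivative_eq_C_coeff_one_of_support [CharP R p]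
    (hf : ∀ m ∈ f.support, ∃ i, m = p ^ i) : derivative f = C (f.coeff 1) := by
  ext n
  rw [coeff_derivative, coeff_C]
  rcases n with _ | n
  · simp
  rw [if_neg n.succ_ne_zero]
  by_cases hn : n + 1 + 1 ∈ f.support
  · obtain ⟨i, hi⟩ := hf _ hn
    obtain ⟨j, rfl⟩ : ∃ j, i = j + 1 := Nat.exists_eq_succ_of_ne_zero (by rintro rfl; simp at hi)
    have hcast : ((n + 1 + 1 : ℕ) : R) = 0 := by
      rw [hi, Nat.cast_pow, CharP.cast_eq_zero, zero_pow j.succ_ne_zero]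
    rw [← Nat.cast_succ, hcast, mul_zero]
  · rw [notMem_support_iff.1 hn, zero_mul]

theorem eval_add_of_support [ExpChar R p] (hf : ∀ m ∈ f.support, ∃ i, m = p ^ i) (a b : R) :
    f.eval (a + b) = f.eval a + f.eval b := by
  simp only [eval_eq_sum, Polynomial.sum_def, ← Finset.sum_add_distrib]
  refine Finset.sum_congr rfl fun m hm => ?_
  obtain ⟨i, rfl⟩ := hf m hm
  rw [add_pow_expChar_pow, mul_add]

end LinearizedPolynomial

theorem eval_add_of_isRoot {R : Type*} [CommRing R] {f : R[X]}
    (hadd : ∀ a b, f.eval (a + b) = f.eval a + f.eval b) {β γ : R} (hβ : f.IsRoot β)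
    (hγ : (X - f).IsRoot γ) : (X - f).eval (β + γ) = β ∧ f.eval (β + γ) = γ := by
  rw [IsRoot.def, eval_sub, eval_X, sub_eq_zero] at hγ
  have hf : f.eval (β + γ) = γ := by rw [hadd, hβ, ← hγ, zero_add]
  exact ⟨by rw [eval_sub, eval_X, hf, add_sub_cancel_right], hf⟩

theorem separable_of_derivative_eq_C {F : Type*} [Field F] {f : F[X]} {a : F} (ha : a ≠ 0)
    (h : derivative f = C a) : f.Separable := by
  rw [separable_def, h]
  exact ⟨0, C a⁻¹, by rw [zero_mul, zero_add, ← C_mul, inv_mul_cancel₀ ha, C_1]⟩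

theorem card_roots_toFinset_of_separable {F : Type*} [Field F] {f : F[X]} (hsep : f.Separable)
    (hs : f.Splits) : #f.roots.toFinset = f.natDegree := by
  rw [Multiset.toFinset_card_of_nodup (nodup_roots hsep), splits_iff_card_roots.1 hs]

section RootCounting

variable {R : Type*} [CommRing R] [IsDomain R] {q : R[X]} {s : Finset R}

theorem card_le_natDegree_of_eval_eq_zero (hq : q ≠ 0) (h : ∀ a ∈ s, q.eval a = 0) :
    #s ≤ q.natDegree :=
  card_le_degree_of_subset_roots fun a ha => (mem_roots hq).2 (h a ha)

theorem card_sub_natDegree_le_card_filter_eval_ne_zero (hq : q ≠ 0) (s : Finset R) :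
    #s - q.natDegree ≤ #(s.filter fun a => q.eval a ≠ 0) := by
  have hzero := card_le_natDegree_of_eval_eq_zero hq (s := s.filter fun a => q.eval a = 0)
    fun a ha => (mem_filter.1 ha).2
  have hsplit := card_filter_add_card_filter_not (s := s) (fun a => q.eval a = 0)
  simp only [ne_eq]
  omega

theorem prod_X_sub_C_dvd_of_eval_eq_zero (h : ∀ a ∈ s, q.eval a = 0) :
    ∏ a ∈ s, (X - C a) ∣ q := by
  rcases eq_or_ne q 0 with rfl | hq
  · exact dvd_zero _
  rw [Finset.prod_eq_multiset_prod]
  exact (Multiset.prod_X_sub_C_dvd_iff_le_roots hq _).2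
    ((Multiset.le_iff_subset s.nodup).2 fun a ha => (mem_roots hq).2 (h a ha))

end RootCounting

theorem card_mul_le_card_filter_product_of_rows {α β : Type*} {s S : Finset α} {t : Finset β}
    {p : α → β → Prop} [∀ a b, Decidable (p a b)] {m : ℕ} (hS : S ⊆ s)
    (h : ∀ a ∈ S, m ≤ #(t.filter (p a))) :
    #S * m ≤ #((s ×ˢ t).filter fun q => p q.1 q.2) := by
  rw [card_filter, sum_product]
  calc #S * m = ∑ _a ∈ S, m := by rw [sum_const, smul_eq_mul]
    _ ≤ ∑ a ∈ S, #(t.filter (p a)) := sum_le_sum h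
    _ ≤ ∑ a ∈ s, #(t.filter (p a)) := sum_le_sum_of_subset hS
    _ = _ := sum_congr rfl fun a _ => card_filter _ _

theorem card_mul_le_card_filter_product_of_cols {α β : Type*} {s : Finset α} {t T : Finset β}
    {p : α → β → Prop} [∀ a b, Decidable (p a b)] {m : ℕ} (hT : T ⊆ t)
    (h : ∀ b ∈ T, m ≤ #(s.filter (p · b))) :
    #T * m ≤ #((s ×ˢ t).filter fun q => p q.1 q.2) := by
  rw [card_filter, sum_product_right]
  calc #T * m = ∑ _b ∈ T, m := by rw [sum_const, smul_eq_mul]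
    _ ≤ ∑ b ∈ T, #(s.filter (p · b)) := sum_le_sum h
    _ ≤ ∑ b ∈ t, #(s.filter (p · b)) := sum_le_sum_of_subset hT
    _ = _ := sum_congr rfl fun b _ => card_filter _ _

theorem eval_aevalAeval {R : Type*} [CommSemiring R] (g f : R[X]) (Q : R[X][Y]) (x : R) :
    (aevalAeval g f Q).eval x = Q.evalEval (g.eval x) (f.eval x) := by
  have : (aeval x).comp (aevalAeval g f) = aevalAeval (R := R) (g.eval x) (f.eval x) :=
    (aevalAevalEquiv R R).symm.injective (by simp)
  rw [← coe_aevalAeval_eq_evalEval, ← this, AlgHom.comp_apply, coe_aeval_eq_eval]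

section BivariateGrid

variable {F : Type*} [Field F] {P : F[X][Y]} {k : ℕ}

theorem card_filter_map_evalRingHom_eq_zero_le (hP : P ≠ 0)
    (hk : ∀ n, (P.coeff n).natDegree ≤ k) (A : Finset F) :
    #(A.filter fun β => P.map (evalRingHom β) = 0) ≤ k := by
  obtain ⟨n, hn⟩ : ∃ n, P.coeff n ≠ 0 := by
    by_contra! h
    exact hP (Polynomial.ext h)
  refine (card_le_natDegree_of_eval_eq_zero hn fun β hβ => ?_).trans (hk n)
  simpa [coeff_map] using congrArg (coeff · n) (mem_filter.1 hβ).2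

theorem card_filter_eval_C_eq_zero_le (hP : P ≠ 0) (hk : P.natDegree ≤ k) (B : Finset F) :
    #(B.filter fun γ => P.eval (C γ) = 0) ≤ k := by
  rw [← card_image_of_injective _ C_injective]
  refine (card_le_natDegree_of_eval_eq_zero hP ?_).trans hk
  simp only [mem_image, mem_filter, forall_exists_index, and_imp]
  rintro _ γ - hγ rfl
  exact hγ

theorem natDegree_eval_C_le (hk : ∀ n, (P.coeff n).natDegree ≤ k) (γ : F) :
    (P.eval (C γ)).natDegree ≤ k := by
  rw [eval_eq_sum_range]
  refine natDegree_sum_le_of_forall_le _ _ fun n _ => ?_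
  rw [← C_pow, mul_comm]
  exact natDegree_C_mul_le _ _ |>.trans (hk n)

theorem sub_le_card_filter_evalEval_ne_zero_of_row (hk : P.natDegree ≤ k) {β : F}
    (hβ : P.map (evalRingHom β) ≠ 0) (B : Finset F) :
    #B - k ≤ #(B.filter fun γ => P.evalEval β γ ≠ 0) := by
  simp_rw [← map_evalRingHom_eval]
  exact (Nat.sub_le_sub_left (natDegree_map_le.trans hk) _).trans
    (card_sub_natDegree_le_card_filter_eval_ne_zero hβ B)

theorem sub_le_card_filter_evalEval_ne_zero_of_col (hk : ∀ n, (P.coeff n).natDegree ≤ k)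
    {γ : F} (hγ : P.eval (C γ) ≠ 0) (A : Finset F) :
    #A - k ≤ #(A.filter fun β => P.evalEval β γ ≠ 0) :=
  (Nat.sub_le_sub_left (natDegree_eval_C_le hk γ) _).trans
    (card_sub_natDegree_le_card_filter_eval_ne_zero hγ A)

theorem exists_eq_C_prod_mul_prod_mul {R Cs : Finset F}
    (hR : ∀ β ∈ R, P.map (evalRingHom β) = 0) (hC : ∀ γ ∈ Cs, P.eval (C γ) = 0) :
    ∃ U, P = C (∏ β ∈ R, (X - C β)) * (∏ γ ∈ Cs, (Y - C (C γ))) * U := by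
  have ha : ∏ β ∈ R, (X - C β) ≠ 0 := prod_ne_zero_iff.2 fun β _ => X_sub_C_ne_zero β
  obtain ⟨P₂, rfl⟩ : C (∏ β ∈ R, (X - C β)) ∣ P := (C_dvd_iff_dvd_coeff _ _).2 fun n =>
    prod_X_sub_C_dvd_of_eval_eq_zero fun β hβ => by
      simpa [coeff_map] using congrArg (coeff · n) (hR β hβ)
  obtain ⟨U, rfl⟩ : ∏ γ ∈ Cs, (Y - C (C γ)) ∣ P₂ := by
    rw [← prod_image (f := fun c => Y - C c) C_injective.injOn]
    refine prod_X_sub_C_dvd_of_eval_eq_zero ?_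
    simp only [mem_image, forall_exists_index, and_imp]
    rintro _ γ hγ rfl
    have := hC γ hγ
    rw [eval_mul, eval_C] at this
    exact (mul_eq_zero.1 this).resolve_left ha
  exact ⟨U, by ring⟩

end BivariateGrid

theorem sInf_lbSet_le {𝔫 r D N nr nc zr zc : ℕ} (hr : 1 ≤ r) (hrn : r ≤ 𝔫)
    (hzr : zr ≤ r - 1) (hzc : zc ≤ r - 1) (hnr : zr + nr = 𝔫) (hnc : zc + nc = 𝔫)
    (hrow : nr * (𝔫 - (r - 1)) ≤ N) (hcol : nc * (𝔫 - (r - 1)) ≤ N)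
    (hgrid : nr * nc + zr * 𝔫 + zc * 𝔫 ≤ N + D) :
    sInf (lbSet 𝔫 r D) ≤ N := by
  have hbdd : BddBelow (lbSet 𝔫 r D) := by
    refine ⟨0, ?_⟩
    rintro _ ⟨nr', nc', -, -, -, -, rfl⟩
    exact le_max_of_le_right (le_max_of_le_left (mul_nonneg (by positivity) (by omega)))
  refine (csInf_le hbdd ⟨nr, nc, by omega, by omega, by omega, by omega, rfl⟩).trans
    (max_le ?_ (max_le ?_ ?_))
  · have hzr' : (zr : ℤ) = 𝔫 - nr := by omega
    have hzc' : (zc : ℤ) = 𝔫 - nc := by omega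
    zify at hgrid
    rw [hzr', hzc'] at hgrid
    linarith
  · zify [show r - 1 ≤ 𝔫 by omega, hr] at hrow
    linarith
  · zify [show r - 1 ≤ 𝔫 by omega, hr] at hcol
    linarith

section Substitution

variable {F : Type*} [Field F] {f g : F[X]}

theorem aevalAeval_C_prod_mul_prod_mul (R Cs : Finset F) (U : F[X][Y]) :
    aevalAeval g f (C (∏ β ∈ R, (X - C β)) * (∏ γ ∈ Cs, (Y - C (C γ))) * U) =
      (∏ β ∈ R, (g - C β)) * (∏ γ ∈ Cs, (f - C γ)) * aevalAeval g f U := by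
  simp only [map_mul, map_prod, map_sub, aevalAeval_C, aevalAeval_Y, aeval_X, aeval_C,
    algebraMap_eq]

theorem natDegree_prod_sub_C_mul_prod_sub_C_mul {R Cs : Finset F} {u : F[X]}
    (h : (∏ β ∈ R, (g - C β)) * (∏ γ ∈ Cs, (f - C γ)) * u ≠ 0) :
    ((∏ β ∈ R, (g - C β)) * (∏ γ ∈ Cs, (f - C γ)) * u).natDegree =
      #R * g.natDegree + #Cs * f.natDegree + u.natDegree := by
  obtain ⟨⟨hR, hC⟩, hu⟩ := by simpa only [mul_ne_zero_iff] using h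
  rw [natDegree_mul (mul_ne_zero hR hC) hu, natDegree_mul hR hC,
    natDegree_prod _ _ fun β hβ => (prod_ne_zero_iff.1 hR) β hβ,
    natDegree_prod _ _ fun γ hγ => (prod_ne_zero_iff.1 hC) γ hγ]
  simp only [natDegree_sub_C, sum_const, smul_eq_mul]

variable {A B : Finset F}
    (hAB : ∀ β ∈ A, ∀ γ ∈ B, g.eval (β + γ) = β ∧ f.eval (β + γ) = γ)
include hAB

theorem injOn_add_of_eval :
    Set.InjOn (fun q : F × F => q.1 + q.2) (A ×ˢ B : Finset (F × F)) := by
  rintro ⟨β, γ⟩ hq ⟨β', γ'⟩ hq' h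
  rw [mem_coe, mem_product] at hq hq'
  obtain ⟨h1, h2⟩ := hAB β hq.1 γ hq.2
  obtain ⟨h1', h2'⟩ := hAB β' hq'.1 γ' hq'.2
  dsimp only at h
  rw [h] at h1 h2
  exact Prod.ext (h1.symm.trans h1') (h2.symm.trans h2')

theorem card_filter_image_add_eval_ne_zero (Q : F[X][Y]) :
    #(((A ×ˢ B).image fun q => q.1 + q.2).filter fun α => (aevalAeval g f Q).eval α ≠ 0) =
      #((A ×ˢ B).filter fun q => Q.evalEval q.1 q.2 ≠ 0) := by
  rw [filter_image, card_image_of_injOn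
    ((injOn_add_of_eval hAB).mono (coe_subset.2 (filter_subset _ _)))]
  refine congrArg card (filter_congr fun q hq => ?_)
  rw [mem_product] at hq
  obtain ⟨h1, h2⟩ := hAB q.1 hq.1 q.2 hq.2
  rw [eval_aevalAeval, h1, h2]

theorem card_filter_evalEval_eq_zero_le {U : F[X][Y]} (hU : aevalAeval g f U ≠ 0)
    {A' B' : Finset F} (hA' : A' ⊆ A) (hB' : B' ⊆ B) :
    #((A' ×ˢ B').filter fun q => U.evalEval q.1 q.2 = 0) ≤ (aevalAeval g f U).natDegree := by
  set Z := (A' ×ˢ B').filter fun q => U.evalEval q.1 q.2 = 0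
  have hZ : Z ⊆ A ×ˢ B := (filter_subset _ _).trans (product_subset_product hA' hB')
  rw [← card_image_of_injOn ((injOn_add_of_eval hAB).mono (coe_subset.2 hZ))]
  refine card_le_natDegree_of_eval_eq_zero hU ?_
  simp only [mem_image]
  rintro _ ⟨q, hq, rfl⟩
  obtain ⟨hqA, hqB⟩ := mem_product.1 (hZ hq)
  obtain ⟨h1, h2⟩ := hAB q.1 hqA q.2 hqB
  rw [eval_aevalAeval, h1, h2]
  exact (mem_filter.1 hq).2

theorem card_mul_card_add_le_card_filter_evalEval_ne_zero_add {P : F[X][Y]}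
    (hw : aevalAeval g f P ≠ 0) :
    #(A.filter fun β => P.map (evalRingHom β) ≠ 0) * #(B.filter fun γ => P.eval (C γ) ≠ 0) +
        #(A.filter fun β => P.map (evalRingHom β) = 0) * g.natDegree +
        #(B.filter fun γ => P.eval (C γ) = 0) * f.natDegree ≤
      #((A ×ˢ B).filter fun q => P.evalEval q.1 q.2 ≠ 0) + (aevalAeval g f P).natDegree := by
  set R := A.filter fun β => P.map (evalRingHom β) = 0
  set Cs := B.filter fun γ => P.eval (C γ) = 0
  set A₁ := A.filter fun β => P.map (evalRingHom β) ≠ 0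
  set B₁ := B.filter fun γ => P.eval (C γ) ≠ 0
  obtain ⟨U, hU⟩ := exists_eq_C_prod_mul_prod_mul (R := R) (Cs := Cs)
    (fun β hβ => (mem_filter.1 hβ).2) (fun γ hγ => (mem_filter.1 hγ).2)
  have hΦ := aevalAeval_C_prod_mul_prod_mul (g := g) (f := f) R Cs U
  rw [← hU] at hΦ
  have hdeg := natDegree_prod_sub_C_mul_prod_sub_C_mul (hΦ ▸ hw)
  rw [← hΦ] at hdeg
  have hUne : aevalAeval g f U ≠ 0 := right_ne_zero_of_mul (hΦ ▸ hw)
  have hzero : ∀ q ∈ A₁ ×ˢ B₁, P.evalEval q.1 q.2 = 0 → U.evalEval q.1 q.2 = 0 := by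
    intro q hq hPq
    obtain ⟨hq₁, hq₂⟩ := mem_product.1 hq
    rw [hU, evalEval_mul, evalEval_mul, evalEval_C, evalEval_prod, eval_prod] at hPq
    refine (mul_eq_zero.1 hPq).resolve_left (mul_ne_zero ?_ ?_)
    · refine prod_ne_zero_iff.2 fun β hβ => ?_
      simp only [eval_sub, eval_X, eval_C, sub_ne_zero]
      rintro rfl
      exact (mem_filter.1 hq₁).2 (mem_filter.1 hβ).2
    · refine prod_ne_zero_iff.2 fun γ hγ => ?_
      simp only [evalEval_sub, evalEval_X, evalEval_C, eval_C, sub_ne_zero]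
      rintro rfl
      exact (mem_filter.1 hq₂).2 (mem_filter.1 hγ).2
  have hzeros : #((A₁ ×ˢ B₁).filter fun q => P.evalEval q.1 q.2 = 0) ≤
      (aevalAeval g f U).natDegree :=
    (card_le_card fun q hq => mem_filter.2 ⟨(mem_filter.1 hq).1,
      hzero q (mem_filter.1 hq).1 (mem_filter.1 hq).2⟩).trans
      (card_filter_evalEval_eq_zero_le hAB hUne (filter_subset _ A) (filter_subset _ B))
  have hnonzeros : #((A₁ ×ˢ B₁).filter fun q => ¬P.evalEval q.1 q.2 = 0) ≤
      #((A ×ˢ B).filter fun q => P.evalEval q.1 q.2 ≠ 0) :=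
    card_le_card (filter_subset_filter _ (product_subset_product (filter_subset _ _)
      (filter_subset _ _)))
  have hsplit := card_filter_add_card_filter_not (s := A₁ ×ˢ B₁)
    (fun q => P.evalEval q.1 q.2 = 0)
  rw [card_product] at hsplit
  omega

theorem sInf_lbSet_le_card_filter_evalEval_ne_zero {𝔫 r D : ℕ} (hA : #A = 𝔫) (hB : #B = 𝔫)
    (hg : g.natDegree = 𝔫) (hf : f.natDegree = 𝔫) (hr : 1 ≤ r) (hrn : r ≤ 𝔫) {P : F[X][Y]}
    (hw : aevalAeval g f P ≠ 0) (hdeg : P.natDegree ≤ r - 1)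
    (hcoeff : ∀ n, (P.coeff n).natDegree ≤ r - 1) (hD : (aevalAeval g f P).natDegree ≤ D) :
    sInf (lbSet 𝔫 r D) ≤ #((A ×ˢ B).filter fun q => P.evalEval q.1 q.2 ≠ 0) := by
  have hP : P ≠ 0 := by
    rintro rfl
    exact hw (map_zero _)
  have hRA := card_filter_add_card_filter_not (s := A) fun β => P.map (evalRingHom β) = 0
  have hCB := card_filter_add_card_filter_not (s := B) fun γ => P.eval (C γ) = 0
  simp only [← ne_eq] at hRA hCB
  have hrow := card_mul_le_card_filter_product_of_rows
    (filter_subset (fun β => P.map (evalRingHom β) ≠ 0) A) (p := fun β γ => P.evalEval β γ ≠ 0)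
    fun β hβ => sub_le_card_filter_evalEval_ne_zero_of_row hdeg (mem_filter.1 hβ).2 B
  have hcol := card_mul_le_card_filter_product_of_cols
    (filter_subset (fun γ => P.eval (C γ) ≠ 0) B) (p := fun β γ => P.evalEval β γ ≠ 0)
    fun γ hγ => sub_le_card_filter_evalEval_ne_zero_of_col hcoeff (mem_filter.1 hγ).2 A
  have hgrid := card_mul_card_add_le_card_filter_evalEval_ne_zero_add hAB hw
  rw [hg, hf] at hgrid
  exact sInf_lbSet_le hr hrn (card_filter_map_evalRingHom_eq_zero_le hP hcoeff A)
    (card_filter_eval_C_eq_zero_le hP hdeg B) (hA ▸ hRA) (hB ▸ hCB) (hB ▸ hrow) (hA ▸ hcol)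
    (by omega)

end Substitution

theorem exists_aevalAeval_eq_of_mem_span_Bset {F : Type*} [Field F] {f g w : F[X]} {r : ℕ}
    (hw : w ∈ Submodule.span F (Bset f g r)) :
    ∃ P : F[X][Y], P.natDegree ≤ r - 1 ∧ (∀ n, (P.coeff n).natDegree ≤ r - 1) ∧
      aevalAeval g f P = w := by
  induction hw using Submodule.span_induction with
  | mem w hw =>
    obtain ⟨i, j, hi, hj, rfl⟩ := hw
    refine ⟨C (X ^ i) * Y ^ j, (natDegree_C_mul_X_pow_le _ _).trans (by omega), fun n => ?_,
      by simp⟩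
    rw [coeff_C_mul_X_pow]
    split_ifs
    · rw [natDegree_X_pow]
      omega
    · rw [natDegree_zero]
      exact Nat.zero_le _
  | zero => exact ⟨0, by simp, by simp, map_zero _⟩
  | add w₁ w₂ _ _ h₁ h₂ =>
    obtain ⟨P₁, hd₁, hc₁, rfl⟩ := h₁
    obtain ⟨P₂, hd₂, hc₂, rfl⟩ := h₂
    refine ⟨P₁ + P₂, (natDegree_add_le _ _).trans (max_le hd₁ hd₂), fun n => ?_, map_add _ _ _⟩
    rw [coeff_add]
    exact (natDegree_add_le _ _).trans (max_le (hc₁ n) (hc₂ n))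
  | smul c w _ h =>
    obtain ⟨P, hd, hc, rfl⟩ := h
    refine ⟨c • P, (natDegree_smul_le _ _).trans hd, fun n => ?_, map_smul _ _ _⟩
    rw [coeff_smul]
    exact (natDegree_smul_le _ _).trans (hc n)

theorem card_filter_evalOn_ne_zero {F : Type*} [Field F] (S : Finset F) (w : F[X]) :
    #(univ.filter fun α : S => evalOn S w α ≠ 0) = #(S.filter fun α => w.eval α ≠ 0) := by
  rw [← Finset.card_map (Function.Embedding.subtype _)]
  congr 1
  ext α
  simp [evalOn, and_comm]

theorem stmt_11_general (p e : ℕ) (hp : p.Prime)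
    (F : Type*) [Field F] [CharP F p]
    (f : F[X])
    (hflin : ∀ m ∈ f.support, ∃ i : ℕ, m = (p ^ e) ^ i)
    (hdeg : 1 < f.natDegree)
    (ha0 : f.coeff 1 ≠ 0) (ha1 : f.coeff 1 ≠ 1)
    (g : F[X]) (hg : g = X - f)
    (hfs : f.Splits) (hgs : g.Splits)
    (r : ℕ) (hr : 1 ≤ r) (hrn : r ≤ f.natDegree) :
    (∀ D : ℕ, ∀ w ∈ Submodule.span F (Bset f g r), w ≠ 0 → w.natDegree ≤ D →
      sInf (lbSet f.natDegree r D) ≤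
        ((((rootSumSet f g).filter fun α => w.eval α ≠ 0)).card : ℤ)) ∧
    (∀ D : ℕ, ∀ v ∈ Submodule.map (evalOn (rootSumSet f g))
        (Submodule.span F (Bset f g r) ⊓ Polynomial.degreeLE F (D : WithBot ℕ)),
      v ≠ 0 →
      sInf (lbSet f.natDegree r D) ≤
        ((Finset.univ.filter fun α : ↥(rootSumSet f g) => v α ≠ 0).card : ℤ)) := by
  subst hg
  have := Fact.mk hp
  have hflin' : ∀ m ∈ f.support, ∃ i, m = p ^ i := fun m hm =>
    let ⟨i, hi⟩ := hflin m hm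
    ⟨e * i, hi.trans (pow_mul p e i).symm⟩
  have hf' := derivative_eq_C_coeff_one_of_support hflin'
  have hg' : derivative (X - f) = C (1 - f.coeff 1) := by
    rw [derivative_sub, derivative_X, hf', C_sub, C_1]
  have hgdeg : (X - f).natDegree = f.natDegree := by
    rw [← neg_sub, natDegree_neg, natDegree_sub_eq_left_of_natDegree_lt (by simpa using hdeg)]
  have hAB : ∀ β ∈ f.roots.toFinset, ∀ γ ∈ (X - f).roots.toFinset,
      (X - f).eval (β + γ) = β ∧ f.eval (β + γ) = γ := fun β hβ γ hγ =>
    eval_add_of_isRoot (eval_add_of_support hflin') (mem_roots'.1 (Multiset.mem_toFinset.1 hβ)).2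
      (mem_roots'.1 (Multiset.mem_toFinset.1 hγ)).2
  have main : ∀ D : ℕ, ∀ w ∈ Submodule.span F (Bset f (X - f) r), w ≠ 0 → w.natDegree ≤ D →
      sInf (lbSet f.natDegree r D) ≤ #((rootSumSet f (X - f)).filter fun α => w.eval α ≠ 0) := by
    intro D w hw hw0 hwD
    obtain ⟨P, hdeg, hcoeff, rfl⟩ := exists_aevalAeval_eq_of_mem_span_Bset hw
    rw [rootSumSet, card_filter_image_add_eval_ne_zero hAB]
    exact sInf_lbSet_le_card_filter_evalEval_ne_zero hAB
      (card_roots_toFinset_of_separable (separable_of_derivative_eq_C ha0 hf') hfs)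
      (hgdeg ▸ card_roots_toFinset_of_separable
        (separable_of_derivative_eq_C (sub_ne_zero.2 ha1.symm) hg') hgs)
      hgdeg rfl hr hrn hw0 hdeg hcoeff hwD
  refine ⟨main, fun D v hv hv0 => ?_⟩
  obtain ⟨w, ⟨hw, hwD⟩, rfl⟩ := hv
  rw [card_filter_evalOn_ne_zero]
  exact main D w hw (by rintro rfl; exact hv0 (map_zero _))
    (natDegree_le_iff_degree_le.2 (mem_degreeLE.1 hwD))

/-- main lower bound.  Under the construction setup with `1 ≤ r ≤ 𝔫`
and `δ := 𝔫 − r + 1`, every nonzero `w ∈ span_F(B_{r²})` with `deg w ≤ ∂` has at least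
`min { B(∂, n_r, n_c) : δ ≤ n_r, n_c ≤ 𝔫 }` nonzero values on `Z_f ⊕ Z_g`; in particular
the evaluation code on `Z_f ⊕ Z_g` of the polynomials in `span_F(B_{r²})` of degree at
most `∂` has minimum distance at least this minimum. -/
theorem stmt_11 (p e : ℕ) (hp : p.Prime) (he : 0 < e)
    (F : Type*) [Field F] [Fintype F] [CharP F p]
    (f : F[X])
    (hflin : ∀ m ∈ f.support, ∃ i : ℕ, m = (p ^ e) ^ i)
    (hdeg : 1 < f.natDegree)
    (ha0 : f.coeff 1 ≠ 0) (ha1 : f.coeff 1 ≠ 1)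
    (g : F[X]) (hg : g = X - f)
    (hfs : f.Splits) (hgs : g.Splits)
    (r : ℕ) (hr : 1 ≤ r) (hrn : r ≤ f.natDegree) :
    (∀ D : ℕ, ∀ w ∈ Submodule.span F (Bset f g r), w ≠ 0 → w.natDegree ≤ D →
      sInf (lbSet f.natDegree r D) ≤
        ((((rootSumSet f g).filter fun α => w.eval α ≠ 0)).card : ℤ)) ∧
    (∀ D : ℕ, ∀ v ∈ Submodule.map (evalOn (rootSumSet f g))
        (Submodule.span F (Bset f g r) ⊓ Polynomial.degreeLE F (D : WithBot ℕ)),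
      v ≠ 0 →
      sInf (lbSet f.natDegree r D) ≤
        ((Finset.univ.filter fun α : ↥(rootSumSet f g) => v α ≠ 0).card : ℤ)) :=
  stmt_11_general p e hp F f hflin hdeg ha0 ha1 g hg hfs hgs r hr hrn
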